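/- The second group cohomology H²(ℤ², Z_1(ℤ²)) of the group ℤ² with coefficients in the ℤ²-module Z_1(ℤ²) (with the translation action) is isomorphic to ℤ as an abelian group. -/

import Mathlib

/-!
For a `ℤ²`-module `M`, write `s, t` for the translations by `e 0, e 1`. A primitive `α` of a
2-cocycle `y` with prescribed values `α (e i) = mᵢ` is obtained by integrating the lattice 1-form
`u ↦ (u • mᵢ - y (u, e i))ᵢ`, which is closed exactly when
`y (e 0, e 1) - y (e 1, e 0) = (s - 1) m₁ - (t - 1) m₀`. Hence `H²(ℤ², M)` embeds into the
coinvariants `M / ((s - 1) M + (t - 1) M)`. For `M = Z₁`, every cycle is a sum of translates of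
the unit square (divide its vertical part by `s - 1` row by row), so the coinvariants are `ℤ`,
detected by the enclosed area `∮ x dy`. The `C₁`-coboundary of a choice of paths from `0` to every
vertex is a cocycle whose commutator has area `1`, so the embedding is onto.
-/

/-- The lattice `ℤ²`. -/
abbrev Z2 : Type := Fin 2 → ℤ

/-- Edge chains of the grid complex `E²` (Cayley graph of `ℤ²`). -/
abbrev C1Z2 : Type := (Z2 × Fin 2) →₀ ℤ

/-- Vertex chains: the free abelian group on `ℤ²`. -/
abbrev C0Z2 : Type := Z2 →₀ ℤ

/-- Translation action of `v ∈ ℤ²` on edge chains: `v • δ_{(m,i)} = δ_{(m+v,i)}`. -/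
noncomputable def shiftZ (v : Z2) : C1Z2 →+ C1Z2 :=
  Finsupp.mapDomain.addMonoidHom fun p => (v + p.1, p.2)

/-- The boundary map `∂ δ_{(m,i)} = δ_{m + e i} - δ_m`. -/
noncomputable def bdZ : C1Z2 →+ C0Z2 :=
  Finsupp.liftAddHom fun p =>
    zmultiplesHom C0Z2
      (Finsupp.single (p.1 + Pi.single p.2 1) 1 - Finsupp.single p.1 1)

lemma bdZ_shiftZ (v : Z2) (γ : C1Z2) :
    bdZ (shiftZ v γ) =
      Finsupp.mapDomain.addMonoidHom (fun m : Z2 => v + m) (bdZ γ) := by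
  have h : bdZ.comp (shiftZ v) =
      (Finsupp.mapDomain.addMonoidHom (fun m : Z2 => v + m)).comp bdZ := by
    apply Finsupp.addHom_ext
    intro p n
    simp only [AddMonoidHom.comp_apply, shiftZ, bdZ,
      Finsupp.mapDomain.addMonoidHom_apply, Finsupp.mapDomain_single,
      Finsupp.liftAddHom_apply_single, zmultiplesHom_apply, map_zsmul, map_sub,
      Finsupp.mapDomain_single]
    rw [add_assoc]
  exact DFunLike.congr_fun h γ

/-- The cycle group `Z_1(ℤ²) = H_1(E²)`, as a `ℤ²`-module (an abelian group with
translation action). -/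
noncomputable abbrev Z1 : AddSubgroup C1Z2 := bdZ.ker

/-- The translation action of `v ∈ ℤ²` on the cycle group `Z_1(ℤ²)`. -/
noncomputable def shiftM (v : Z2) : Z1 →+ Z1 where
  toFun γ := ⟨shiftZ v γ.1, by
    have h0 : bdZ γ.1 = 0 := γ.2
    simp [AddMonoidHom.mem_ker, bdZ_shiftZ, h0]⟩
  map_zero' := by ext; simp
  map_add' a b := by ext; simp

/-- The linear map whose kernel is the group of 2-cocycles of `ℤ²` with values in
`Z_1(ℤ²)`: `y` is a cocycle iff `u·y(v,w) − y(u+v,w) + y(u,v+w) − y(u,v) = 0`. -/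
noncomputable def Tmap : ((Z2 × Z2) → Z1) →+ ((Z2 × Z2 × Z2) → Z1) where
  toFun y t := shiftM t.1 (y (t.2.1, t.2.2)) - y (t.1 + t.2.1, t.2.2)
    + y (t.1, t.2.1 + t.2.2) - y (t.1, t.2.1)
  map_zero' := by funext t; simp
  map_add' y z := by
    funext t
    simp only [Pi.add_apply, map_add]
    abel

/-- The coboundary map sending `α : ℤ² → Z_1(ℤ²)` to the 2-coboundary
`(u,v) ↦ u·α(v) − α(u+v) + α(u)`; its range is the group of 2-coboundaries. -/
noncomputable def Smap : (Z2 → Z1) →+ ((Z2 × Z2) → Z1) where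
  toFun α t := shiftM t.1 (α t.2) - α (t.1 + t.2) + α t.1
  map_zero' := by funext t; simp
  map_add' α β := by
    funext t
    simp only [Pi.add_apply, map_add]
    abel

abbrev e (i : Fin 2) : Z2 := Pi.single i 1

lemma Z2.eq_zsmul_add (u : Z2) : u = u 0 • e 0 + u 1 • e 1 := by
  ext i; fin_cases i <;> simp

@[simp] lemma Z2.vec_eta (u : Z2) : ![u 0, u 1] = u := by
  ext i; fin_cases i <;> simp

@[simp] lemma Z2.vec_add_e_zero (a b : ℤ) : ![a, b] + e 0 = ![a + 1, b] := by
  ext i; fin_cases i <;> simp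

@[simp] lemma Z2.vec_add_e_one (a b : ℤ) : ![a, b] + e 1 = ![a, b + 1] := by
  ext i; fin_cases i <;> simp

section Antiderivative

variable {M : Type*} [AddCommGroup M]

lemma exists_int_antideriv (c : M) (s : ℤ → M) :
    ∃ g : ℤ → M, g 0 = c ∧ ∀ n, g (n + 1) = g n + s n := by
  refine ⟨fun n => c + ∑ i ∈ Finset.Ico 0 n, s i - ∑ i ∈ Finset.Ico n 0, s i, by simp,
    fun n => ?_⟩
  dsimp only
  rcases le_or_gt 0 n with hn | hn
  · rw [← Finset.insert_Ico_right_eq_Ico_add_one hn, Finset.sum_insert (by simp),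
      Finset.Ico_eq_empty_of_le (by omega : 0 ≤ n + 1), Finset.Ico_eq_empty_of_le hn]
    abel
  · rw [← Finset.insert_Ico_add_one_left_eq_Ico hn, Finset.sum_insert (by simp),
      Finset.Ico_eq_empty_of_le (by omega : n + 1 ≤ 0), Finset.Ico_eq_empty_of_le hn.le]
    abel

/-- A closed lattice 1-form `(f₀, f₁)` on `ℤ²` is exact. -/
lemma exists_Z2_antideriv (c : M) (f : Fin 2 → Z2 → M)
    (hf : ∀ u, f 0 u + f 1 (u + e 0) = f 1 u + f 0 (u + e 1)) :
    ∃ g : Z2 → M, g 0 = c ∧ ∀ i u, g (u + e i) = g u + f i u := by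
  obtain ⟨h, h0, hstep⟩ := exists_int_antideriv c fun a => f 0 ![a, 0]
  choose G hG0 hGstep using fun a => exists_int_antideriv (h a) fun b => f 1 ![a, b]
  have hcomp : ∀ a b, f 0 ![a, b] + f 1 ![a + 1, b] = f 1 ![a, b] + f 0 ![a, b + 1] := by
    intro a b
    simpa only [Z2.vec_add_e_zero, Z2.vec_add_e_one] using hf ![a, b]
  have hrow : ∀ a b, G (a + 1) b = G a b + f 0 ![a, b] := by
    intro a b
    induction b using Int.induction_on with
    | zero => simpa [hG0] using hstep a
    | succ b ih =>
      rw [hGstep, hGstep, ih, add_assoc, hcomp, ← add_assoc]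
    | pred b ih =>
      have h1 := hGstep (a + 1) (-b - 1)
      have h2 := hGstep a (-b - 1)
      have h3 := hcomp a (-b - 1)
      simp only [sub_add_cancel] at h1 h2 h3
      rw [ih, h2] at h1
      linear_combination (norm := abel) -h1 - h3
  refine ⟨fun u => G (u 0) (u 1), by simp [hG0, h0], fun i u => ?_⟩
  fin_cases i
  · simpa using hrow (u 0) (u 1)
  · simpa using hGstep (u 0) (u 1)

end Antiderivative

/-- In the extension of `ℤ²` defined by a cocycle `y`, this is the commutator of the lifts of
`e 0` and `e 1`. -/
def cocycleCommutator {M : Type*} [AddCommGroup M] : (Z2 × Z2 → M) →+ M :=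
  Pi.evalAddMonoidHom (fun _ => M) (e 0, e 1) - Pi.evalAddMonoidHom (fun _ => M) (e 1, e 0)

lemma map_cocycleCommutator {M N : Type*} [AddCommGroup M] [AddCommGroup N] (f : M →+ N)
    (y : Z2 × Z2 → M) : f (cocycleCommutator y) = cocycleCommutator (f ∘ y) := by
  simp [cocycleCommutator]

structure Z2Action (M : Type*) [AddCommGroup M] where
  act : Z2 → M →+ M
  act_zero : ∀ x, act 0 x = x
  act_add : ∀ u v x, act (u + v) x = act u (act v x)

namespace Z2Action

variable {M : Type*} [AddCommGroup M] (A : Z2Action M)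

def augmentation : AddSubgroup M :=
  (A.act (e 0) - AddMonoidHom.id M).range ⊔ (A.act (e 1) - AddMonoidHom.id M).range

lemma act_zsmul_sub_mem_range (v : Z2) (x : M) (a : ℤ) :
    A.act (a • v) x - x ∈ (A.act v - AddMonoidHom.id M).range := by
  have hv : ∀ y, A.act v y - y ∈ (A.act v - AddMonoidHom.id M).range := fun y => ⟨y, rfl⟩
  induction a using Int.induction_on with
  | zero => simp [A.act_zero]
  | succ a ih =>
    rw [add_smul, one_smul, add_comm, A.act_add, ← sub_add_sub_cancel _ (A.act (a • v) x)]
    exact add_mem (hv _) ih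
  | pred a ih =>
    have h := hv (A.act ((-a - 1 : ℤ) • v) x)
    rw [← A.act_add, show v + (-a - 1 : ℤ) • v = (-a : ℤ) • v by rw [sub_smul, one_smul]; abel]
      at h
    convert sub_mem ih h using 1
    abel

lemma act_sub_mem_augmentation (u : Z2) (x : M) : A.act u x - x ∈ A.augmentation := by
  rw [Z2.eq_zsmul_add u, A.act_add, ← sub_add_sub_cancel _ (A.act (u 1 • e 1) x)]
  exact add_mem (AddSubgroup.mem_sup_left (A.act_zsmul_sub_mem_range _ _ _))
    (AddSubgroup.mem_sup_right (A.act_zsmul_sub_mem_range _ _ _))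

def IsCocycle (y : Z2 × Z2 → M) : Prop :=
  ∀ u v w, A.act u (y (v, w)) - y (u + v, w) + y (u, v + w) - y (u, v) = 0

def coboundary (α : Z2 → M) (t : Z2 × Z2) : M :=
  A.act t.1 (α t.2) - α (t.1 + t.2) + α t.1

lemma isCocycle_coboundary (α : Z2 → M) : A.IsCocycle (A.coboundary α) := by
  intro u v w
  simp only [coboundary, map_add, map_sub, ← A.act_add, add_assoc]
  abel

lemma commutator_coboundary (α : Z2 → M) :
    cocycleCommutator (A.coboundary α) =
      (A.act (e 0) (α (e 1)) - α (e 1)) - (A.act (e 1) (α (e 0)) - α (e 0)) := by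
  simp only [cocycleCommutator, coboundary, AddMonoidHom.sub_apply, Pi.evalAddMonoidHom_apply,
    add_comm (e 1)]
  abel

lemma commutator_coboundary_mem_augmentation (α : Z2 → M) :
    cocycleCommutator (A.coboundary α) ∈ A.augmentation := by
  rw [commutator_coboundary]
  exact sub_mem (AddSubgroup.mem_sup_left ⟨α (e 1), rfl⟩)
    (AddSubgroup.mem_sup_right ⟨α (e 0), rfl⟩)

variable {A}

lemma IsCocycle.sub {y z : Z2 × Z2 → M} (hy : A.IsCocycle y) (hz : A.IsCocycle z) :
    A.IsCocycle (y - z) := by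
  intro u v w
  simp only [Pi.sub_apply, map_sub]
  linear_combination (norm := abel) hy u v w - hz u v w

lemma IsCocycle.eq_zero_of_forall_e {E : Z2 × Z2 → M} (hE : A.IsCocycle E)
    (he : ∀ i u, E (u, e i) = 0) : E = 0 := by
  have hper : ∀ u i, Function.Periodic (fun v => E (u, v)) (e i) := by
    intro u i v
    exact sub_eq_zero.mp (by simpa [he] using hE u v (e i))
  funext ⟨u, v⟩
  calc E (u, v) = E (u, 0 + (v 0 • e 0 + v 1 • e 1)) := by rw [zero_add, ← Z2.eq_zsmul_add]
    _ = E (u, 0) := ((hper u 0).zsmul (v 0)).add_period ((hper u 1).zsmul (v 1)) 0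
    _ = E (u, 0 + e 0) := ((hper u 0) 0).symm
    _ = 0 := by rw [zero_add, he]

lemma IsCocycle.exists_coboundary_eq {y : Z2 × Z2 → M} (hy : A.IsCocycle y)
    (hc : cocycleCommutator y ∈ A.augmentation) : ∃ α, A.coboundary α = y := by
  obtain ⟨_, ⟨a, rfl⟩, _, ⟨b, rfl⟩, hab⟩ := AddSubgroup.mem_sup.mp hc
  -- the primitive will take the value `m i` at `e i`
  set m : Fin 2 → M := ![-b, a]
  obtain ⟨α, hα0, hαe⟩ :=
    exists_Z2_antideriv (y (0, 0)) (fun i u => A.act u (m i) - y (u, e i)) fun u => by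
      have h01 := hy u (e 0) (e 1)
      have h10 := hy u (e 1) (e 0)
      have hu := congrArg (A.act u) hab
      simp only [cocycleCommutator, AddMonoidHom.sub_apply, Pi.evalAddMonoidHom_apply,
        AddMonoidHom.id_apply, map_add, map_sub, ← A.act_add] at hu
      simp only [m, Matrix.cons_val_zero, Matrix.cons_val_one, map_neg,
        A.act_add, add_comm (e 1) (e 0)] at h01 h10 hu ⊢
      linear_combination (norm := abel) h01 - h10 + hu
  have hy0 : ∀ i, y (0, e i) = y (0, 0) := fun i =>
    sub_eq_zero.mp (by simpa [A.act_zero] using hy 0 0 (e i))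
  refine ⟨α, sub_eq_zero.mp ((A.isCocycle_coboundary α).sub hy |>.eq_zero_of_forall_e ?_)⟩
  intro i u
  have h0 := hαe i 0
  rw [zero_add, hα0, hy0, A.act_zero, add_sub_cancel] at h0
  simp only [Pi.sub_apply, coboundary, hαe, h0]
  abel

end Z2Action

lemma Finsupp.eq_zero_of_mapDomain_add_left_eq_self {G M : Type*} [AddCommGroup G]
    [IsAddTorsionFree G] [AddCommMonoid M] {v : G} (hv : v ≠ 0) {c : G →₀ M}
    (h : Finsupp.mapDomain (v + ·) c = c) : c = 0 := by
  have hper : Function.Periodic c v := fun x => by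
    simpa [h, add_comm] using Finsupp.mapDomain_apply (add_right_injective v) c x
  by_contra hc
  obtain ⟨m, hm⟩ := Finsupp.support_nonempty_iff.mpr hc
  refine (c.support.finite_toSet).not_infinite
    (Set.infinite_of_injective_forall_mem (f := fun n : ℤ => m + n • v) (fun a b hab => ?_)
      fun n => by simpa [(hper.zsmul n) m] using hm)
  rw [← sub_eq_zero, ← IsAddTorsionFree.zsmul_eq_zero_iff_left hv, sub_smul]
  simpa [sub_eq_zero] using hab

noncomputable def shC (v : Z2) : C0Z2 →+ C0Z2 :=
  Finsupp.mapDomain.addMonoidHom (v + ·)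

@[simp] lemma shC_single (v m : Z2) (n : ℤ) :
    shC v (Finsupp.single m n) = Finsupp.single (v + m) n := by
  simp [shC]

@[simp] lemma shiftZ_single (v m : Z2) (i : Fin 2) (n : ℤ) :
    shiftZ v (Finsupp.single (m, i) n) = Finsupp.single (v + m, i) n := by
  simp [shiftZ]

@[simp] lemma bdZ_single (m : Z2) (i : Fin 2) (n : ℤ) :
    bdZ (Finsupp.single (m, i) n) = n • (Finsupp.single (m + e i) 1 - Finsupp.single m 1) := by
  simp [bdZ]

noncomputable def vertexAction : Z2Action C0Z2 where
  act := shC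
  act_zero x := by simp only [shC, zero_add]; exact Finsupp.mapDomain_id
  act_add u v x := by simp [shC, ← Finsupp.mapDomain_comp, Function.comp_def, add_assoc]

@[simp] lemma vertexAction_act : vertexAction.act = shC := rfl

noncomputable def edgeAction : Z2Action C1Z2 where
  act := shiftZ
  act_zero x := by simp only [shiftZ, zero_add]; exact Finsupp.mapDomain_id
  act_add u v x := by simp [shiftZ, ← Finsupp.mapDomain_comp, Function.comp_def, add_assoc]

@[simp] lemma edgeAction_act : edgeAction.act = shiftZ := rfl

noncomputable def cycleAction : Z2Action Z1 where
  act := shiftM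
  act_zero x := Subtype.ext (edgeAction.act_zero x)
  act_add u v x := Subtype.ext (edgeAction.act_add u v x)

@[simp] lemma cycleAction_act : cycleAction.act = shiftM := rfl

noncomputable def extC (i : Fin 2) : C1Z2 →+ C0Z2 :=
  Finsupp.comapDomain.addMonoidHom (Prod.mk_left_injective i)

@[simp] lemma extC_apply (i : Fin 2) (γ : C1Z2) (m : Z2) : extC i γ m = γ (m, i) := rfl

@[simp] lemma extC_single (i j : Fin 2) (m : Z2) (n : ℤ) :
    extC i (Finsupp.single (m, j) n) = if j = i then Finsupp.single m n else 0 := by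
  ext m'
  by_cases hj : j = i <;> simp [Finsupp.single_apply, hj]

lemma eq_zero_of_extC_eq_zero {γ : C1Z2} (h : ∀ i, extC i γ = 0) : γ = 0 := by
  ext ⟨m, i⟩
  simpa using DFunLike.congr_fun (h i) m

lemma bdZ_eq_sum_extC (γ : C1Z2) :
    bdZ γ = (shC (e 0) (extC 0 γ) - extC 0 γ) + (shC (e 1) (extC 1 γ) - extC 1 γ) := by
  induction γ using Finsupp.induction_linear with
  | zero => simp
  | add f g hf hg => simp only [map_add, hf, hg]; abel
  | single p n =>
    obtain ⟨m, i⟩ := p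
    fin_cases i <;> simp [smul_sub, Finsupp.smul_single, add_comm m]

noncomputable def rowProj : C0Z2 →+ (ℤ →₀ ℤ) :=
  Finsupp.mapDomain.addMonoidHom (· 1)

lemma rowProj_shC (v : Z2) (c : C0Z2) :
    rowProj (shC v c) = Finsupp.mapDomain (v 1 + ·) (rowProj c) := by
  simp only [rowProj, shC, Finsupp.mapDomain.addMonoidHom_apply, ← Finsupp.mapDomain_comp]
  rfl

lemma rowProj_extC_one_eq_zero {γ : C1Z2} (hγ : bdZ γ = 0) : rowProj (extC 1 γ) = 0 := by
  apply Finsupp.eq_zero_of_mapDomain_add_left_eq_self one_ne_zero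
  have h := congrArg rowProj (bdZ_eq_sum_extC γ)
  have h0 : Finsupp.mapDomain (e 0 1 + ·) (rowProj (extC 0 γ)) = rowProj (extC 0 γ) := by
    simp only [Pi.single_eq_of_ne (show (1 : Fin 2) ≠ 0 by decide), zero_add]
    exact Finsupp.mapDomain_id
  rw [hγ, map_zero, map_add, map_sub, map_sub, rowProj_shC, rowProj_shC, h0, sub_self, zero_add,
    eq_comm, sub_eq_zero] at h
  simpa using h

lemma mem_range_shC_sub_of_rowProj_eq_zero {c : C0Z2} (hc : rowProj c = 0) :
    c ∈ (shC (e 0) - AddMonoidHom.id _).range := by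
  have key : ∀ c : C0Z2, c - Finsupp.mapDomain (fun m => ![0, m 1]) c ∈
      (shC (e 0) - AddMonoidHom.id _).range := by
    intro c
    induction c using Finsupp.induction_linear with
    | zero => simp
    | add f g hf hg =>
      convert add_mem hf hg using 1
      rw [Finsupp.mapDomain_add]
      abel
    | single m n =>
      have hm : m 0 • e 0 + ![0, m 1] = m := by ext i; fin_cases i <;> simp
      have := vertexAction.act_zsmul_sub_mem_range (e 0) (Finsupp.single ![0, m 1] n) (m 0)
      rwa [vertexAction_act, shC_single, hm,
        ← Finsupp.mapDomain_single (f := fun m : Z2 => ![0, m 1])] at this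
  have hproj : Finsupp.mapDomain (fun m => ![0, m 1]) c = 0 := by
    rw [show (fun m : Z2 => ![0, m 1]) = (fun b => ![0, b]) ∘ (· 1) from rfl,
      Finsupp.mapDomain_comp]
    simpa [rowProj] using congrArg (Finsupp.mapDomain fun b => ![0, b]) hc
  simpa [hproj] using key c

/-- The boundary of the unit square `[0,1]²`, oriented counterclockwise. -/
noncomputable def square : C1Z2 :=
  Finsupp.single (0, 0) 1 + Finsupp.single (e 0, 1) 1 - Finsupp.single (e 1, 0) 1 -
    Finsupp.single (0, 1) 1

lemma bdZ_square : bdZ square = 0 := by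
  simp [square, add_comm (e 1) (e 0)]

/-- The cellular boundary map `C₂ → C₁`, a unit cell being indexed by its lower left corner. -/
noncomputable def squares : C0Z2 →+ C1Z2 :=
  Finsupp.liftAddHom fun m => zmultiplesHom C1Z2 (shiftZ m square)

@[simp] lemma squares_single (m : Z2) (n : ℤ) :
    squares (Finsupp.single m n) = n • shiftZ m square := by
  simp [squares]

lemma bdZ_squares (P : C0Z2) : bdZ (squares P) = 0 := by
  induction P using Finsupp.induction_linear with
  | zero => simp
  | add f g hf hg => rw [map_add, map_add, hf, hg, add_zero]
  | single m n => rw [squares_single, map_zsmul, bdZ_shiftZ, bdZ_square, map_zero, smul_zero]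

lemma extC_one_squares (P : C0Z2) : extC 1 (squares P) = shC (e 0) P - P := by
  induction P using Finsupp.induction_linear with
  | zero => simp
  | add f g hf hg => simp only [map_add, hf, hg]; abel
  | single m n => simp [square, smul_sub, add_comm (e 0)]

lemma exists_squares_eq {γ : C1Z2} (hγ : bdZ γ = 0) : ∃ P, squares P = γ := by
  obtain ⟨P, hP⟩ := mem_range_shC_sub_of_rowProj_eq_zero (rowProj_extC_one_eq_zero hγ)
  refine ⟨P, (sub_eq_zero.mp (eq_zero_of_extC_eq_zero ?_)).symm⟩
  have h1 : extC 1 (γ - squares P) = 0 := by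
    rw [map_sub, extC_one_squares, ← hP, AddMonoidHom.sub_apply, AddMonoidHom.id_apply, sub_self]
  have h0 : extC 0 (γ - squares P) = 0 := by
    refine Finsupp.eq_zero_of_mapDomain_add_left_eq_self (v := e 0) (by simp) ?_
    have := bdZ_eq_sum_extC (γ - squares P)
    rw [map_sub, hγ, bdZ_squares, sub_zero, h1, map_zero, sub_zero, add_zero, eq_comm,
      sub_eq_zero] at this
    exact this
  intro i
  fin_cases i
  exacts [h0, h1]

/-- The discrete line integral `∮ x dy`: for a cycle, the signed area it encloses. -/
noncomputable def area : C1Z2 →+ ℤ :=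
  Finsupp.liftAddHom fun p => zmultiplesHom ℤ (if p.2 = 1 then p.1 0 else 0)

@[simp] lemma area_single (m : Z2) (i : Fin 2) (n : ℤ) :
    area (Finsupp.single (m, i) n) = n * if i = 1 then m 0 else 0 := by
  simp [area]

noncomputable def momentY : C0Z2 →+ ℤ :=
  Finsupp.liftAddHom fun m => zmultiplesHom ℤ (m 1)

@[simp] lemma momentY_single (m : Z2) (n : ℤ) : momentY (Finsupp.single m n) = n * m 1 := by
  simp [momentY]

lemma area_shiftZ (v : Z2) (γ : C1Z2) :
    area (shiftZ v γ) = area γ + v 0 * momentY (bdZ γ) := by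
  induction γ using Finsupp.induction_linear with
  | zero => simp
  | add f g hf hg => simp only [map_add, hf, hg]; ring
  | single p n =>
    obtain ⟨m, i⟩ := p
    fin_cases i
    · simp
    · simp; ring

lemma area_shiftM (v : Z2) (x : Z1) : area (shiftM v x : C1Z2) = area x := by
  rw [show (shiftM v x : C1Z2) = shiftZ v x from rfl, area_shiftZ, x.2, map_zero, mul_zero,
    add_zero]

lemma area_square : area square = 1 := by
  simp [square]

noncomputable def squareCycle : Z1 := ⟨square, bdZ_square⟩

lemma area_squareCycle : area squareCycle = 1 := area_square

lemma sub_area_smul_mem_augmentation (r : Z1) :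
    r - area r • squareCycle ∈ cycleAction.augmentation := by
  obtain ⟨P, hP⟩ := exists_squares_eq r.2
  obtain rfl : (squares.codRestrict Z1 bdZ_squares) P = r := Subtype.ext hP
  clear hP
  induction P using Finsupp.induction_linear with
  | zero => simp
  | add f g hf hg =>
    convert add_mem hf hg using 1
    rw [map_add, AddSubgroup.coe_add, map_add, add_smul]
    abel
  | single m n =>
    have hsq : squares.codRestrict Z1 bdZ_squares (Finsupp.single m n) =
        n • shiftM m squareCycle := Subtype.ext (squares_single m n)
    rw [hsq, AddSubgroup.coe_zsmul, map_zsmul, area_shiftM, area_squareCycle, smul_eq_mul,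
      mul_one, ← smul_sub]
    exact zsmul_mem (cycleAction.act_sub_mem_augmentation m _) n

lemma augmentation_le_ker_area : cycleAction.augmentation ≤ (area.comp Z1.subtype).ker := by
  apply sup_le <;> rintro _ ⟨x, rfl⟩ <;> simp [area_shiftM]

lemma mem_augmentation_iff_area_eq_zero (r : Z1) :
    r ∈ cycleAction.augmentation ↔ area r = 0 := by
  refine ⟨fun h => augmentation_le_ker_area h, fun h => ?_⟩
  simpa [h] using sub_area_smul_mem_augmentation r

lemma augmentation_le_range_bdZ : vertexAction.augmentation ≤ bdZ.range := by
  have h : ∀ i, bdZ.comp (Finsupp.mapDomain.addMonoidHom (·, i)) =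
      vertexAction.act (e i) - AddMonoidHom.id _ := fun i =>
    Finsupp.addHom_ext fun m n => by simp [smul_sub, Finsupp.smul_single, add_comm m]
  apply sup_le <;> rintro _ ⟨c, rfl⟩
  exacts [⟨_, DFunLike.congr_fun (h 0) c⟩, ⟨_, DFunLike.congr_fun (h 1) c⟩]

lemma exists_bdZ_eq (u : Z2) : ∃ γ, bdZ γ = Finsupp.single u 1 - Finsupp.single 0 1 := by
  simpa using
    augmentation_le_range_bdZ (vertexAction.act_sub_mem_augmentation u (Finsupp.single 0 1))

lemma exists_isCocycle_area_cocycleCommutator_eq_one :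
    ∃ y : Z2 × Z2 → Z1, cycleAction.IsCocycle y ∧ area (cocycleCommutator y : Z1) = 1 := by
  -- `y` is the coboundary, computed in `C₁`, of a choice of paths from `0` to each vertex
  choose c hc using exists_bdZ_eq
  have hmem : ∀ t, edgeAction.coboundary c t ∈ Z1 := by
    rintro ⟨u, v⟩
    simp [AddMonoidHom.mem_ker, Z2Action.coboundary, bdZ_shiftZ, hc, Finsupp.mapDomain_sub]
  refine ⟨fun t => ⟨_, hmem t⟩,
    fun u v w => Subtype.ext (edgeAction.isCocycle_coboundary c u v w), ?_⟩
  have h := map_cocycleCommutator Z1.subtype fun t => ⟨_, hmem t⟩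
  simp only [AddSubgroup.coe_subtype] at h
  rw [h, show Subtype.val ∘ (fun t => ⟨_, hmem t⟩) = edgeAction.coboundary c from rfl,
    edgeAction.commutator_coboundary]
  simp [area_shiftZ, hc]

noncomputable def areaClass : Tmap.ker →+ ℤ :=
  (area.comp Z1.subtype).comp (cocycleCommutator.comp Tmap.ker.subtype)

lemma Tmap_eq_zero_iff (y : Z2 × Z2 → Z1) : Tmap y = 0 ↔ cycleAction.IsCocycle y := by
  simp only [funext_iff, Prod.forall]
  rfl

lemma Smap_eq_coboundary (α : Z2 → Z1) : Smap α = cycleAction.coboundary α := rfl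

lemma areaClass_surjective : Function.Surjective areaClass := by
  obtain ⟨y, hy, h1⟩ := exists_isCocycle_area_cocycleCommutator_eq_one
  intro n
  exact ⟨n • ⟨y, (Tmap_eq_zero_iff y).mpr hy⟩, by simp [areaClass, h1]⟩

lemma ker_areaClass : areaClass.ker = Smap.range.addSubgroupOf Tmap.ker := by
  ext ⟨y, hy⟩
  rw [AddSubgroup.mem_addSubgroupOf, AddMonoidHom.mem_ker, AddMonoidHom.mem_range]
  simp only [Smap_eq_coboundary]
  constructor
  · intro h
    exact ((Tmap_eq_zero_iff y).mp hy).exists_coboundary_eq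
      ((mem_augmentation_iff_area_eq_zero _).mpr h)
  · rintro ⟨α, rfl⟩
    exact (mem_augmentation_iff_area_eq_zero _).mp
      (cycleAction.commutator_coboundary_mem_augmentation α)

/-- The second group cohomology `H²(ℤ², Z_1(ℤ²))` — 2-cocycles modulo 2-coboundaries,
for the translation action of `ℤ²` on the cycle group `Z_1(ℤ²) = H_1(E²)` — is
isomorphic to `ℤ`. -/
theorem h2_iso_int :
    Nonempty ((Tmap.ker ⧸ Smap.range.addSubgroupOf Tmap.ker) ≃+ ℤ) := by
  rw [← ker_areaClass]
  exact ⟨QuotientAddGroup.quotientKerEquivOfSurjective areaClass areaClass_surjective⟩
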